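/- arXiv:2409.11809 — 2 statements merged into one kernel-verified Lean document; each statement's English description precedes it below -/
import Mathlib

section
/- Korn's type inequality on the channel with tangency boundary condition: Let u : ℝ³ → ℝ³ be twice continuously differentiable on a neighborhood of [0,1]×ℝ², 1-periodic in the coordinates x₂ and x₃, and satisfy the tangency condition u₁(0,x₂,x₃) = u₁(1,x₂,x₃) = 0 for all x₂,x₃. Then ∫_{(0,1)³} |∇u(x)|² dx ≤ (1/2) ∫_{(0,1)³} |∇u(x) + ∇u(x)ᵀ − (2/3)(div u)(x)·I₃|² dx, where |·| denotes the Frobenius norm of a 3×3 matrix. -/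
/-!
Pointwise, `½|A + Aᵀ - ⅔ (tr A) I|² = |A|² + tr (A²) - ⅔ (tr A)²`, so with `A = ∇u` it suffices
to show `∫ tr ((∇u)²) = ∫ (div u)²`. By symmetry of second derivatives,
`∂ⱼuᵢ ∂ᵢuⱼ - ∂ᵢuᵢ ∂ⱼuⱼ = ∂ⱼ(uᵢ ∂ᵢuⱼ) - ∂ᵢ(uᵢ ∂ⱼuⱼ)`, and the integral over the cube of a pure
derivative `∂ₖg` vanishes as soon as `g` agrees on the two faces normal to `eₖ`: for `k = 1, 2`
by periodicity, for `k = 0` because `u 0` and its tangential derivatives vanish on the walls.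
Hence the right-hand side equals `∫ |∇u|² + ⅓ ∫ (div u)²`.
-/

open MeasureTheory

/-- Standard basis vectors of `ℝ × ℝ × ℝ`. -/
noncomputable def e3 : Fin 3 → ℝ × ℝ × ℝ := ![(1, 0, 0), (0, 1, 0), (0, 0, 1)]

/-- The `j`-th partial derivative of a scalar function on `ℝ³`. -/
noncomputable def pd (j : Fin 3) (f : ℝ × ℝ × ℝ → ℝ) (x : ℝ × ℝ × ℝ) : ℝ :=
  fderiv ℝ f x (e3 j)

/-- The Jacobian matrix `(∇u)ᵢⱼ = ∂ⱼuᵢ` of a vector field `u = (u₀,u₁,u₂)`. -/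
noncomputable def jac (u : Fin 3 → ℝ × ℝ × ℝ → ℝ) (x : ℝ × ℝ × ℝ) :
    Matrix (Fin 3) (Fin 3) ℝ :=
  Matrix.of fun i j => pd j (u i) x

/-- The divergence `div u = ∂₁u₁ + ∂₂u₂ + ∂₃u₃`. -/
noncomputable def divg (u : Fin 3 → ℝ × ℝ × ℝ → ℝ) (x : ℝ × ℝ × ℝ) : ℝ :=
  ∑ i, pd i (u i) x

/-- The squared Frobenius norm of a 3×3 real matrix. -/
def frobSq (M : Matrix (Fin 3) (Fin 3) ℝ) : ℝ := ∑ i, ∑ j, (M i j) ^ 2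

/-- The open unit cube `(0,1)³`, modelling the channel `(0,1)×𝕋²`. -/
def cube : Set (ℝ × ℝ × ℝ) :=
  Set.Ioo (0 : ℝ) 1 ×ˢ (Set.Ioo (0 : ℝ) 1 ×ˢ Set.Ioo (0 : ℝ) 1)

/-- The closed strip `[0,1] × ℝ²`. -/
def strip : Set (ℝ × ℝ × ℝ) := Set.Icc (0 : ℝ) 1 ×ˢ (Set.univ : Set (ℝ × ℝ))

open Set Function

section Calculus

variable {E : Type*} [NormedAddCommGroup E] [NormedSpace ℝ E]

theorem hasDerivAt_comp_add_smul {f : E → ℝ} {p v : E} {t : ℝ}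
    (hf : DifferentiableAt ℝ f (p + t • v)) :
    HasDerivAt (fun s : ℝ => f (p + s • v)) (fderiv ℝ f (p + t • v) v) t := by
  have hline : HasDerivAt (fun s : ℝ => p + s • v) v t := by
    simpa using ((hasDerivAt_id t).smul_const v).const_add p
  exact hf.hasFDerivAt.comp_hasDerivAt t hline

theorem fderiv_apply_eq_zero_of_forall_add_smul {f : E → ℝ} {p v : E}
    (h : ∀ s : ℝ, f (p + s • v) = 0) : fderiv ℝ f p v = 0 := by
  by_cases hf : DifferentiableAt ℝ f p
  · have hd := hasDerivAt_comp_add_smul (t := 0) (v := v) (by simpa using hf)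
    simp only [h, zero_smul, add_zero] at hd
    exact hd.unique (hasDerivAt_const 0 0)
  · simp [fderiv_zero_of_not_differentiableAt hf]

theorem integral_Ioo_fderiv_apply_add_smul {f : E → ℝ} {s : Set E} (hs : IsOpen s)
    (hf : ContDiffOn ℝ 1 f s) {p v : E} (hseg : ∀ t ∈ Icc (0 : ℝ) 1, p + t • v ∈ s) :
    ∫ t in Ioo (0 : ℝ) 1, fderiv ℝ f (p + t • v) v = f (p + v) - f p := by
  rw [← integral_Ioc_eq_integral_Ioo, ← intervalIntegral.integral_of_le zero_le_one]
  rw [← uIcc_of_le zero_le_one] at hseg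
  have hderiv : ∀ t ∈ uIcc (0 : ℝ) 1,
      HasDerivAt (fun s : ℝ => f (p + s • v)) (fderiv ℝ f (p + t • v) v) t := fun t ht =>
    hasDerivAt_comp_add_smul <|
      (hf.contDiffAt (hs.mem_nhds (hseg t ht))).differentiableAt one_ne_zero
  have hcont : ContinuousOn (fun t : ℝ => fderiv ℝ f (p + t • v) v) (uIcc 0 1) :=
    ((hf.continuousOn_fderiv_of_isOpen hs le_rfl).comp (by fun_prop) hseg).clm_apply
      continuousOn_const
  simpa using intervalIntegral.integral_eq_sub_of_hasDerivAt hderiv hcont.intervalIntegrable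

theorem Function.Periodic.fderiv {F : Type*} [NormedAddCommGroup F] [NormedSpace ℝ F]
    {f : E → F} {c : E} (h : Periodic f c) : Periodic (fderiv ℝ f) c := fun x => by
  rw [← fderiv_comp_add_right, h.funext]

end Calculus

theorem measurableSet_cube : MeasurableSet cube :=
  measurableSet_Ioo.prod (measurableSet_Ioo.prod measurableSet_Ioo)

theorem convex_strip : Convex ℝ strip := (convex_Icc 0 1).prod convex_univ

theorem volume_restrict_cube : volume.restrict cube =
    (volume.restrict (Ioo (0 : ℝ) 1)).prod
      ((volume.restrict (Ioo (0 : ℝ) 1)).prod (volume.restrict (Ioo (0 : ℝ) 1))) := by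
  rw [Measure.prod_restrict, Measure.prod_restrict]
  rfl

theorem ContinuousOn.integrableOn_cube {f : ℝ × ℝ × ℝ → ℝ} (hf : ContinuousOn f strip) :
    IntegrableOn f cube := by
  have hcube : Icc (0 : ℝ) 1 ×ˢ (Icc (0 : ℝ) 1 ×ˢ Icc (0 : ℝ) 1) ⊆ strip :=
    fun p hp => ⟨hp.1, mem_univ _⟩
  exact ((hf.mono hcube).integrableOn_compact
    (isCompact_Icc.prod (isCompact_Icc.prod isCompact_Icc))).mono_set
    (prod_mono Ioo_subset_Icc_self (prod_mono Ioo_subset_Icc_self Ioo_subset_Icc_self))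

theorem setIntegral_cube_eq_zero_of_fst_slices {F : ℝ × ℝ × ℝ → ℝ} (hF : IntegrableOn F cube)
    (h : ∀ y z : ℝ, ∫ t in Ioo (0 : ℝ) 1, F (t, y, z) = 0) : ∫ x in cube, F x = 0 := by
  rw [IntegrableOn, volume_restrict_cube] at hF
  rw [volume_restrict_cube, integral_prod_symm F hF]
  simp [h]

theorem setIntegral_cube_eq_zero_of_snd_slices {F : ℝ × ℝ × ℝ → ℝ} (hF : IntegrableOn F cube)
    (h : ∀ x ∈ Ioo (0 : ℝ) 1, ∀ z : ℝ, ∫ t in Ioo (0 : ℝ) 1, F (x, t, z) = 0) :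
    ∫ x in cube, F x = 0 := by
  rw [IntegrableOn, volume_restrict_cube] at hF
  rw [volume_restrict_cube, integral_prod F hF]
  refine integral_eq_zero_of_ae ?_
  filter_upwards [ae_restrict_mem measurableSet_Ioo, hF.prod_right_ae] with x hx hFx
  simp [integral_prod_symm _ hFx, h x hx]

theorem setIntegral_cube_eq_zero_of_thd_slices {F : ℝ × ℝ × ℝ → ℝ} (hF : IntegrableOn F cube)
    (h : ∀ x ∈ Ioo (0 : ℝ) 1, ∀ y : ℝ, ∫ t in Ioo (0 : ℝ) 1, F (x, y, t) = 0) :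
    ∫ x in cube, F x = 0 := by
  rw [IntegrableOn, volume_restrict_cube] at hF
  rw [volume_restrict_cube, integral_prod F hF]
  refine integral_eq_zero_of_ae ?_
  filter_upwards [ae_restrict_mem measurableSet_Ioo, hF.prod_right_ae] with x hx hFx
  simp [integral_prod _ hFx, h x hx]

section PartialDerivatives

variable {U : Set (ℝ × ℝ × ℝ)} {f g : ℝ × ℝ × ℝ → ℝ} {x : ℝ × ℝ × ℝ}

theorem ContDiffOn.continuousOn_pd (hU : IsOpen U) (hf : ContDiffOn ℝ 1 f U) (j : Fin 3) :
    ContinuousOn (pd j f) U :=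
  (hf.continuousOn_fderiv_of_isOpen hU le_rfl).clm_apply continuousOn_const

theorem ContDiffOn.pd (hU : IsOpen U) (hf : ContDiffOn ℝ 2 f U) (j : Fin 3) :
    ContDiffOn ℝ 1 (pd j f) U :=
  (hf.fderiv_of_isOpen hU (by norm_num)).clm_apply contDiffOn_const

theorem Function.Periodic.pd {c : ℝ × ℝ × ℝ} (h : Periodic f c) (j : Fin 3) :
    Periodic (pd j f) c := fun x =>
  congrArg (fun L => L (e3 j)) (h.fderiv x)

theorem pd_mul (j : Fin 3) (hf : DifferentiableAt ℝ f x) (hg : DifferentiableAt ℝ g x) :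
    pd j (f * g) x = f x * pd j g x + g x * pd j f x := by
  simp [pd, fderiv_mul hf hg]

theorem ContDiffAt.differentiableAt_pd (hf : ContDiffAt ℝ 2 f x) (j : Fin 3) :
    DifferentiableAt ℝ (pd j f) x :=
  ((hf.fderiv_right (m := 1) (by norm_num)).differentiableAt one_ne_zero).clm_apply
    (differentiableAt_const _)

theorem pd_pd_comm (i j : Fin 3) (hf : ContDiffAt ℝ 2 f x) :
    pd j (pd i f) x = pd i (pd j f) x := by
  have hd : DifferentiableAt ℝ (fderiv ℝ f) x :=
    (hf.fderiv_right (m := 1) (by norm_num)).differentiableAt one_ne_zero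
  have hpd : ∀ k l : Fin 3, pd l (pd k f) x = fderiv ℝ (fderiv ℝ f) x (e3 l) (e3 k) :=
    fun k l => by
      change fderiv ℝ (fun y => fderiv ℝ f y (e3 k)) x (e3 l) = _
      simp [fderiv_clm_apply hd (differentiableAt_const _)]
  rw [hpd, hpd]
  exact hf.isSymmSndFDerivAt (by simp) _ _

theorem pd_eq_zero_of_forall_eq_zero {a : ℝ} (hf : ∀ y z : ℝ, f (a, y, z) = 0) {i : Fin 3}
    (hi : i ≠ 0) (y z : ℝ) : pd i f (a, y, z) = 0 := by
  refine fderiv_apply_eq_zero_of_forall_add_smul fun s => ?_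
  fin_cases i
  · exact absurd rfl hi
  · simpa [e3] using hf (y + s) z
  · simpa [e3] using hf y (z + s)

theorem pd_mul_pd_sub_pd_mul_pd (i j : Fin 3)
    (hf : DifferentiableAt ℝ f x) (hg : ContDiffAt ℝ 2 g x) :
    pd j f x * pd i g x - pd i f x * pd j g x = pd j (f * pd i g) x - pd i (f * pd j g) x := by
  rw [pd_mul j hf (hg.differentiableAt_pd i), pd_mul i hf (hg.differentiableAt_pd j),
    pd_pd_comm i j hg]
  ring

end PartialDerivatives

/-- For `j = 0` this pairs the two walls `x₁ = 0` and `x₁ = 1`; for `j = 1, 2` it is periodicity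
in `xⱼ` along the strip. -/
def EqualOnOppositeFaces (j : Fin 3) (g : ℝ × ℝ × ℝ → ℝ) : Prop :=
  ∀ p ∈ strip, p + e3 j ∈ strip → g (p + e3 j) = g p

theorem Function.Periodic.equalOnOppositeFaces {g : ℝ × ℝ × ℝ → ℝ} {j : Fin 3}
    (h : Periodic g (e3 j)) : EqualOnOppositeFaces j g :=
  fun p _ _ => h p

theorem equalOnOppositeFaces_zero {g : ℝ × ℝ × ℝ → ℝ}
    (h : ∀ y z : ℝ, g (1, y, z) = g (0, y, z)) : EqualOnOppositeFaces 0 g := by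
  rintro ⟨x, y, z⟩ ⟨⟨hx0, -⟩, -⟩ ⟨⟨-, hx1⟩, -⟩
  obtain rfl : x = 0 := by simp [e3] at hx1; linarith
  simpa [e3] using h y z

theorem equalOnOppositeFaces_zero_mul {f : ℝ × ℝ × ℝ → ℝ} (hf0 : ∀ y z : ℝ, f (0, y, z) = 0)
    (hf1 : ∀ y z : ℝ, f (1, y, z) = 0) (g : ℝ × ℝ × ℝ → ℝ) : EqualOnOppositeFaces 0 (f * g) :=
  equalOnOppositeFaces_zero fun y z => by simp [hf0, hf1]

theorem equalOnOppositeFaces_mul_pd_zero {f : ℝ × ℝ × ℝ → ℝ} (hf0 : ∀ y z : ℝ, f (0, y, z) = 0)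
    (hf1 : ∀ y z : ℝ, f (1, y, z) = 0) (g : ℝ × ℝ × ℝ → ℝ) {i : Fin 3} (hi : i ≠ 0) :
    EqualOnOppositeFaces 0 (g * pd i f) :=
  equalOnOppositeFaces_zero fun y z => by
    simp [pd_eq_zero_of_forall_eq_zero hf0 hi, pd_eq_zero_of_forall_eq_zero hf1 hi]

theorem setIntegral_cube_pd_eq_zero {U : Set (ℝ × ℝ × ℝ)} (hU : IsOpen U) (hUs : strip ⊆ U)
    {g : ℝ × ℝ × ℝ → ℝ} (hg : ContDiffOn ℝ 1 g U) {j : Fin 3}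
    (hj : EqualOnOppositeFaces j g) : ∫ x in cube, pd j g x = 0 := by
  have hline : ∀ p ∈ strip, p + e3 j ∈ strip →
      ∫ t in Ioo (0 : ℝ) 1, pd j g (p + t • e3 j) = 0 := fun p hp hpe => by
    unfold pd
    rw [integral_Ioo_fderiv_apply_add_smul hU hg
      fun t ht => hUs (convex_strip.add_smul_mem hp hpe ht), hj p hp hpe, sub_self]
  have hint : IntegrableOn (pd j g) cube := ((hg.continuousOn_pd hU j).mono hUs).integrableOn_cube
  fin_cases j
  · refine setIntegral_cube_eq_zero_of_fst_slices hint fun y z => ?_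
    simpa [e3] using hline (0, y, z) (by simp [strip]) (by simp [strip, e3])
  · refine setIntegral_cube_eq_zero_of_snd_slices hint fun x hx z => ?_
    simpa [e3] using hline (x, 0, z) ⟨Ioo_subset_Icc_self hx, mem_univ _⟩
      ⟨by simpa [e3] using Ioo_subset_Icc_self hx, mem_univ _⟩
  · refine setIntegral_cube_eq_zero_of_thd_slices hint fun x hx y => ?_
    simpa [e3] using hline (x, y, 0) ⟨Ioo_subset_Icc_self hx, mem_univ _⟩
      ⟨by simpa [e3] using Ioo_subset_Icc_self hx, mem_univ _⟩

theorem trace_jac (u : Fin 3 → ℝ × ℝ × ℝ → ℝ) (x : ℝ × ℝ × ℝ) : (jac u x).trace = divg u x :=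
  rfl

@[fun_prop]
theorem continuous_frobSq : Continuous frobSq := by
  unfold frobSq
  fun_prop

theorem frobSq_add_transpose_sub_smul_one (A : Matrix (Fin 3) (Fin 3) ℝ) :
    frobSq (A + A.transpose - ((2 / 3) * A.trace) • 1) =
      2 * frobSq A + 2 * (A * A).trace - (4 / 3) * A.trace ^ 2 := by
  simp [frobSq, Matrix.trace, Matrix.mul_apply, Fin.sum_univ_three, Matrix.one_apply]
  ring

theorem integral_sum_sum {α ι κ : Type*} [MeasurableSpace α] {μ : Measure α} [Fintype ι]
    [Fintype κ] {F : ι → κ → α → ℝ} (hF : ∀ i j, Integrable (F i j) μ) :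
    ∫ x, ∑ i, ∑ j, F i j x ∂μ = ∑ i, ∑ j, ∫ x, F i j x ∂μ := by
  rw [integral_finsetSum _ fun i _ => integrable_finsetSum _ fun j _ => hF i j]
  exact Finset.sum_congr rfl fun i _ => integral_finsetSum _ fun j _ => hF i j

structure IsChannelField (U : Set (ℝ × ℝ × ℝ)) (u : Fin 3 → ℝ × ℝ × ℝ → ℝ) : Prop where
  isOpen : IsOpen U
  strip_subset : strip ⊆ U
  contDiffOn : ∀ i, ContDiffOn ℝ 2 (u i) U
  periodic : ∀ i, ∀ j ≠ 0, Periodic (u i) (e3 j)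
  wall_zero : ∀ y z : ℝ, u 0 (0, y, z) = 0
  wall_one : ∀ y z : ℝ, u 0 (1, y, z) = 0

namespace IsChannelField

variable {u : Fin 3 → ℝ × ℝ × ℝ → ℝ} {U : Set (ℝ × ℝ × ℝ)}

theorem contDiffOn_mul_pd (hu : IsChannelField U u) (l m n : Fin 3) :
    ContDiffOn ℝ 1 (u l * pd m (u n)) U :=
  ((hu.contDiffOn l).of_le one_le_two).mul ((hu.contDiffOn n).pd hu.isOpen m)

theorem continuousOn_pd (hu : IsChannelField U u) (i j : Fin 3) : ContinuousOn (pd j (u i)) strip :=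
  (((hu.contDiffOn i).of_le one_le_two).continuousOn_pd hu.isOpen j).mono hu.strip_subset

theorem contDiffAt (hu : IsChannelField U u) {x : ℝ × ℝ × ℝ} (hx : x ∈ cube) (i : Fin 3) :
    ContDiffAt ℝ 2 (u i) x :=
  (hu.contDiffOn i).contDiffAt
    (hu.isOpen.mem_nhds (hu.strip_subset ⟨Ioo_subset_Icc_self hx.1, mem_univ _⟩))

theorem setIntegral_pd_mul_pd_comm (hu : IsChannelField U u) (i j : Fin 3) :
    ∫ x in cube, pd j (u i) x * pd i (u j) x = ∫ x in cube, pd i (u i) x * pd j (u j) x := by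
  have hface : ∀ k ≠ 0, ∀ l m n, EqualOnOppositeFaces k (u l * pd m (u n)) :=
    fun k hk l m n => ((hu.periodic l k hk).mul ((hu.periodic n k hk).pd m)).equalOnOppositeFaces
  have hA : EqualOnOppositeFaces j (u i * pd i (u j)) := by
    rcases eq_or_ne j 0 with rfl | hj
    · rcases eq_or_ne i 0 with rfl | hi
      · exact equalOnOppositeFaces_zero_mul hu.wall_zero hu.wall_one _
      · exact equalOnOppositeFaces_mul_pd_zero hu.wall_zero hu.wall_one _ hi
    · exact hface j hj i i j
  have hB : EqualOnOppositeFaces i (u i * pd j (u j)) := by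
    rcases eq_or_ne i 0 with rfl | hi
    · exact equalOnOppositeFaces_zero_mul hu.wall_zero hu.wall_one _
    · exact hface i hi i j j
  have hdiv : EqOn (fun x => pd j (u i) x * pd i (u j) x - pd i (u i) x * pd j (u j) x)
      (fun x => pd j (u i * pd i (u j)) x - pd i (u i * pd j (u j)) x) cube := fun x hx =>
    pd_mul_pd_sub_pd_mul_pd i j ((hu.contDiffAt hx i).differentiableAt two_ne_zero)
      (hu.contDiffAt hx j)
  have hint_pd : ∀ k l m n, IntegrableOn (pd k (u l * pd m (u n))) cube := fun k l m n =>
    (((hu.contDiffOn_mul_pd l m n).continuousOn_pd hu.isOpen k).mono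
      hu.strip_subset).integrableOn_cube
  rw [← sub_eq_zero, ← integral_sub ((hu.continuousOn_pd i j).fun_mul
      (hu.continuousOn_pd j i)).integrableOn_cube
      ((hu.continuousOn_pd i i).fun_mul (hu.continuousOn_pd j j)).integrableOn_cube,
    setIntegral_congr_fun measurableSet_cube hdiv, integral_sub (hint_pd j i i j) (hint_pd i i j j),
    setIntegral_cube_pd_eq_zero hu.isOpen hu.strip_subset (hu.contDiffOn_mul_pd i i j) hA,
    setIntegral_cube_pd_eq_zero hu.isOpen hu.strip_subset (hu.contDiffOn_mul_pd i j j) hB,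
    sub_zero]

theorem setIntegral_trace_jac_mul_self (hu : IsChannelField U u) :
    ∫ x in cube, (jac u x * jac u x).trace = ∫ x in cube, (jac u x).trace ^ 2 := by
  have hint : ∀ i j k l, IntegrableOn (fun x => pd j (u i) x * pd l (u k) x) cube :=
    fun i j k l => ((hu.continuousOn_pd i j).fun_mul (hu.continuousOn_pd k l)).integrableOn_cube
  calc ∫ x in cube, (jac u x * jac u x).trace
      = ∫ x in cube, ∑ i, ∑ j, pd j (u i) x * pd i (u j) x := by
        simp only [Matrix.trace, Matrix.diag, Matrix.mul_apply, jac, Matrix.of_apply]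
    _ = ∑ i, ∑ j, ∫ x in cube, pd j (u i) x * pd i (u j) x :=
        integral_sum_sum fun i j => hint i j j i
    _ = ∑ i, ∑ j, ∫ x in cube, pd i (u i) x * pd j (u j) x := by
        simp only [hu.setIntegral_pd_mul_pd_comm]
    _ = ∫ x in cube, ∑ i, ∑ j, pd i (u i) x * pd j (u j) x :=
        (integral_sum_sum fun i j => hint i i j j).symm
    _ = ∫ x in cube, (jac u x).trace ^ 2 := by
        simp only [trace_jac, divg, sq, Finset.sum_mul_sum]

theorem half_setIntegral_frobSq_add_transpose_sub_smul_one (hu : IsChannelField U u) :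
    (1 / 2) * ∫ x in cube, frobSq (jac u x + (jac u x).transpose
        - ((2 / 3) * divg u x) • (1 : Matrix (Fin 3) (Fin 3) ℝ)) =
      (∫ x in cube, frobSq (jac u x)) + (1 / 3) * ∫ x in cube, divg u x ^ 2 := by
  have hjac : ContinuousOn (jac u) strip :=
    continuousOn_pi.2 fun i => continuousOn_pi.2 fun j => hu.continuousOn_pd i j
  have hint : ∀ Φ : Matrix (Fin 3) (Fin 3) ℝ → ℝ, Continuous Φ →
      IntegrableOn (fun x => Φ (jac u x)) cube := fun Φ hΦ =>
    (hΦ.comp_continuousOn hjac).integrableOn_cube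
  have hfrob := hint frobSq continuous_frobSq
  have htrace_sq := hint (fun A => (A * A).trace) (by fun_prop)
  have hsq_trace := hint (fun A => A.trace ^ 2) (by fun_prop)
  simp only [← trace_jac, frobSq_add_transpose_sub_smul_one]
  rw [integral_sub (by exact (hfrob.const_mul 2).add (htrace_sq.const_mul 2))
      (hsq_trace.const_mul _), integral_add (hfrob.const_mul 2) (htrace_sq.const_mul 2),
    integral_const_mul, integral_const_mul, integral_const_mul, hu.setIntegral_trace_jac_mul_self]
  ring

end IsChannelField

/-- **Korn's type inequality on the channel with tangency boundary condition.**
If `u` is twice continuously differentiable on a neighborhood of `[0,1]×ℝ²`,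
`1`-periodic in `x₂, x₃`, and its first component vanishes on the faces
`x₁ = 0` and `x₁ = 1`, then
`∫ |∇u|² ≤ (1/2) ∫ |∇u + ∇uᵀ − (2/3)(div u)·I₃|²` over `(0,1)³`. -/
theorem korn_channel
    (u : Fin 3 → ℝ × ℝ × ℝ → ℝ)
    (U : Set (ℝ × ℝ × ℝ)) (hU : IsOpen U) (hUs : strip ⊆ U)
    (hreg : ∀ i, ContDiffOn ℝ 2 (u i) U)
    (hper2 : ∀ i, ∀ x : ℝ × ℝ × ℝ, u i (x.1, x.2.1 + 1, x.2.2) = u i x)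
    (hper3 : ∀ i, ∀ x : ℝ × ℝ × ℝ, u i (x.1, x.2.1, x.2.2 + 1) = u i x)
    (hbc0 : ∀ y z : ℝ, u 0 (0, y, z) = 0)
    (hbc1 : ∀ y z : ℝ, u 0 (1, y, z) = 0) :
    ∫ x in cube, frobSq (jac u x) ≤
      (1 / 2) * ∫ x in cube,
        frobSq (jac u x + (jac u x).transpose
          - ((2 / 3) * divg u x) • (1 : Matrix (Fin 3) (Fin 3) ℝ)) := by
  have hper : ∀ i, ∀ j ≠ 0, Periodic (u i) (e3 j) := fun i j hj ⟨x, y, z⟩ => by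
    fin_cases j
    · exact absurd rfl hj
    · simpa [e3] using hper2 i (x, y, z)
    · simpa [e3] using hper3 i (x, y, z)
  have hu : IsChannelField U u := ⟨hU, hUs, hreg, hper, hbc0, hbc1⟩
  rw [hu.half_setIntegral_frobSq_add_transpose_sub_smul_one]
  have hdiv_sq : 0 ≤ ∫ x in cube, divg u x ^ 2 :=
    setIntegral_nonneg measurableSet_cube fun _ _ => sq_nonneg _
  linarith
end

section
/- Verification of assumption (A) in the Navier-slip scaling regime (Remark 1.2): Fix positive real numbers R, ρ̄, θ̄, μ̄, κ̄ and positive constants c₁, c₄. Then there exists ε₀ > 0 such that for every ε with 0 < ε < ε₀, taking the slip coefficients a_u^I = c₁, a_θ^{II} = c₄, a_θ^I = ε and a_u^{II} = ε, assumption (A) holds; that is: (i) (16/(15R))·a_θ^I·(κ̄/θ̄)·ρ̄ − (2/(5R))·a_u^{II}·a_θ^I·(κ̄/θ̄)·ρ̄ > 0, and (ii) there exist λ₀ > 0 and λ₁ > 0 such that the symmetric 6×6 matrix M(λ₀,λ₁) defined below is positive definite. -/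
/-!
With `a_u^{II} = a_θ^I = ε` and `λ₀ = λ₁ = L / ε`, the diagonal of `M` no longer depends on `ε`
(it is `R θ̄` and multiples of `L`), while every coupling carrying `λ a_u^{II} a_θ^I` is `O(ε)`.
At `ε = 0` the only couplings left are `R ρ̄ / 2` and `μ̄ / 2` in the first row, which Young's
inequality absorbs into the diagonal once `L` is large; the resulting strict inequalities
persist for small `ε` by continuity.
-/

/-- The symmetric 6×6 matrix of assumption (A) in the paper, with parameters
`R` (gas constant), `ρ` (reference density `ρ̄`), `θ` (reference temperature `θ̄`),
`μ = μ(θ̄)`, `κ = κ(θ̄)`, the slip coefficients `auI = a_u^I`, `auII = a_u^{II}`,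
`atI = a_θ^I`, `atII = a_θ^{II}`, and the positive parameters `l0 = λ₀`, `l1 = λ₁`.
All entries not listed in the paper are zero. -/
noncomputable def slipMatrix (R ρ θ μ κ auI auII atI atII l0 l1 : ℝ) :
    Matrix (Fin 6) (Fin 6) ℝ :=
  let m11 : ℝ := R * θ
  let m13 : ℝ := (1 / 2) * R * ρ + (l0 / 2) * R * (4 / (5 * R ^ 2)) * auII * atI * κ
  let m14 : ℝ := (l0 / 2) * R * (4 / (5 * R ^ 2)) * auII * atI * κ
  let m15 : ℝ := (1 / 2) * μ
  let m16 : ℝ := (l1 / 2) * R * (4 / (5 * R ^ 2)) * auII * atI * κ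
  let m22 : ℝ := l0 * (2 / (3 * R)) * Real.sqrt (2 / R) * auI * auII * μ ^ 2 / Real.sqrt θ
  let m23 : ℝ := l0 * (2 / (5 * R ^ 2)) * auII * atI * κ / θ
  let m33 : ℝ :=
    l0 * (32 / (75 * R ^ 2)) * Real.sqrt (2 / R) * atI * atII * κ ^ 2 / (θ * Real.sqrt θ)
  let m44 : ℝ := l0 * (16 / (15 * R)) * atI * (κ / θ) * ρ
  let m55 : ℝ := l1 * (2 / (3 * R)) * Real.sqrt (2 / R) * auI * auII * μ ^ 2 / Real.sqrt θ
  let m56 : ℝ := l1 * (2 / (5 * R ^ 2)) * auII * atI * κ / θ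
  let m66 : ℝ :=
    l1 * (32 / (75 * R ^ 2)) * Real.sqrt (2 / R) * atI * atII * κ ^ 2 / (θ * Real.sqrt θ)
  !![m11, 0,   m13, m14, m15, m16;
     0,   m22, m23, 0,   0,   0;
     m13, m23, m33, 0,   0,   0;
     m14, 0,   0,   m44, 0,   0;
     m15, 0,   0,   0,   m55, m56;
     m16, 0,   0,   0,   m56, m66]

open Matrix Filter Topology

theorem add_two_mul_add_div_mul_sq_nonneg {w : ℝ} (hw : 0 < w) (p x y : ℝ) :
    0 ≤ w * x ^ 2 + 2 * p * x * y + p ^ 2 / w * y ^ 2 := by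
  have : w * x ^ 2 + 2 * p * x * y + p ^ 2 / w * y ^ 2 = (w * x + p * y) ^ 2 / w := by
    field_simp
    ring
  rw [this]
  positivity

theorem sum_mul_sq_pos {ι : Type*} [Fintype ι] {w x : ι → ℝ} (hw : ∀ i, 0 < w i) (hx : x ≠ 0) :
    0 < ∑ i, w i * x i ^ 2 := by
  obtain ⟨i, hi⟩ := Function.ne_iff.mp hx
  exact Finset.sum_pos' (fun j _ => (mul_nonneg (hw j).le (sq_nonneg _)))
    ⟨i, Finset.mem_univ i, mul_pos (hw i) (pow_two_pos_of_ne_zero hi)⟩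

def slipPatternMatrix (a b c d e f p q r s u v : ℝ) : Matrix (Fin 6) (Fin 6) ℝ :=
  !![a, 0, p, q, r, s;
     0, b, u, 0, 0, 0;
     p, u, c, 0, 0, 0;
     q, 0, 0, d, 0, 0;
     r, 0, 0, 0, e, v;
     s, 0, 0, 0, v, f]

namespace slipPatternMatrix

variable {a b c d e f p q r s u v : ℝ}

theorem isHermitian : (slipPatternMatrix a b c d e f p q r s u v).IsHermitian := by
  ext i j
  fin_cases i <;> fin_cases j <;> rfl

theorem dotProduct_mulVec (x : Fin 6 → ℝ) :
    star x ⬝ᵥ (slipPatternMatrix a b c d e f p q r s u v *ᵥ x) =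
      a * x 0 ^ 2 + b * x 1 ^ 2 + c * x 2 ^ 2 + d * x 3 ^ 2 + e * x 4 ^ 2 + f * x 5 ^ 2 +
        2 * (p * x 0 * x 2 + q * x 0 * x 3 + r * x 0 * x 4 + s * x 0 * x 5 +
          u * x 1 * x 2 + v * x 4 * x 5) := by
  simp only [dotProduct, Pi.star_apply, star_trivial, mulVec, slipPatternMatrix, of_apply,
    cons_val', cons_val_fin_one, Fin.sum_univ_six, cons_val_zero, cons_val_one, cons_val]
  ring

/-- Young's inequality with weight `a / 8` for each of the four couplings of the first
coordinate, and with weights `b / 2`, `e / 2` for the couplings `u`, `v`. -/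
theorem posDef (ha : 0 < a) (hb : 0 < b) (hc : 8 * p ^ 2 / a + 2 * u ^ 2 / b < c)
    (hd : 8 * q ^ 2 / a < d) (he : 16 * r ^ 2 / a < e) (hf : 8 * s ^ 2 / a + 2 * v ^ 2 / e < f) :
    (slipPatternMatrix a b c d e f p q r s u v).PosDef := by
  refine posDef_iff_dotProduct_mulVec.mpr ⟨isHermitian, fun x hx => ?_⟩
  have he' : 0 < e := lt_of_le_of_lt (by positivity) he
  let w : Fin 6 → ℝ := ![a / 2, b / 2, c - 8 * p ^ 2 / a - 2 * u ^ 2 / b, d - 8 * q ^ 2 / a,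
    e / 2 - 8 * r ^ 2 / a, f - 8 * s ^ 2 / a - 2 * v ^ 2 / e]
  have hw : ∀ i, 0 < w i := by
    intro i
    fin_cases i <;> simp only [w, Fin.reduceFinMk, Matrix.cons_val]
    · exact half_pos ha
    · exact half_pos hb
    · linear_combination hc
    · linear_combination hd
    · linear_combination he / 2
    · linear_combination hf
  have hsum := sum_mul_sq_pos hw hx
  simp only [w, Fin.sum_univ_six, Matrix.cons_val] at hsum
  have ha8 : 0 < a / 8 := by positivity
  have h02 := add_two_mul_add_div_mul_sq_nonneg ha8 p (x 0) (x 2)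
  have h03 := add_two_mul_add_div_mul_sq_nonneg ha8 q (x 0) (x 3)
  have h04 := add_two_mul_add_div_mul_sq_nonneg ha8 r (x 0) (x 4)
  have h05 := add_two_mul_add_div_mul_sq_nonneg ha8 s (x 0) (x 5)
  have h12 := add_two_mul_add_div_mul_sq_nonneg (half_pos hb) u (x 1) (x 2)
  have h45 := add_two_mul_add_div_mul_sq_nonneg (half_pos he') v (x 4) (x 5)
  rw [dotProduct_mulVec]
  linear_combination hsum + h02 + h03 + h04 + h05 + h12 + h45

theorem eventually_posDef (ha : 0 < a) (hb : 0 < b) (hc : 8 * p ^ 2 / a < c) (hd : 0 < d)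
    (he : 16 * r ^ 2 / a < e) (hf : 0 < f) (k₁ k₂ k₃ k₄ k₅ : ℝ) :
    ∀ᶠ ε in 𝓝 (0 : ℝ), (slipPatternMatrix a b c d e f (p + k₁ * ε) (k₂ * ε) r (k₃ * ε)
      (k₄ * ε) (k₅ * ε)).PosDef := by
  have hc' : ∀ᶠ ε in 𝓝 (0 : ℝ), 8 * (p + k₁ * ε) ^ 2 / a + 2 * (k₄ * ε) ^ 2 / b < c :=
    ContinuousAt.eventually_lt (by fun_prop) continuousAt_const (by simpa using hc)
  have hd' : ∀ᶠ ε in 𝓝 (0 : ℝ), 8 * (k₂ * ε) ^ 2 / a < d :=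
    ContinuousAt.eventually_lt (by fun_prop) continuousAt_const (by simpa using hd)
  have hf' : ∀ᶠ ε in 𝓝 (0 : ℝ), 8 * (k₃ * ε) ^ 2 / a + 2 * (k₅ * ε) ^ 2 / e < f :=
    ContinuousAt.eventually_lt (by fun_prop) continuousAt_const (by simpa using hf)
  filter_upwards [hc', hd', hf'] with ε hc hd hf using posDef ha hb hc hd he hf

end slipPatternMatrix

theorem exists_slipMatrix_navier_eq {R ρ θ μ κ c₁ c₄ : ℝ} (hR : 0 < R) (hρ : 0 < ρ) (hθ : 0 < θ)
    (hμ : 0 < μ) (hκ : 0 < κ) (hc₁ : 0 < c₁) (hc₄ : 0 < c₄) :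
    ∃ A B D k j : ℝ, 0 < A ∧ 0 < B ∧ 0 < D ∧ ∀ L ε : ℝ, ε ≠ 0 →
      slipMatrix R ρ θ μ κ c₁ ε ε c₄ (L / ε) (L / ε) =
        slipPatternMatrix (R * θ) (L * A) (L * B) (L * D) (L * A) (L * B)
          (R * ρ / 2 + L * k * ε) (L * k * ε) (μ / 2) (L * k * ε) (L * j * ε) (L * j * ε) := by
  refine ⟨2 / (3 * R) * √(2 / R) * c₁ * μ ^ 2 / √θ,
    32 / (75 * R ^ 2) * √(2 / R) * c₄ * κ ^ 2 / (θ * √θ), 16 / (15 * R) * (κ / θ) * ρ,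
    2 * κ / (5 * R), 2 * κ / (5 * R ^ 2 * θ), by positivity, by positivity, by positivity,
    fun L ε hε => ?_⟩
  change slipPatternMatrix _ _ _ _ _ _ _ _ _ _ _ _ = _
  congr 1 <;> field_simp <;> ring

/-- **Verification of assumption (A) in the Navier-slip scaling regime (Remark 1.2).**
For fixed positive `R, ρ̄, θ̄, μ̄, κ̄` and positive constants `c₁, c₄`, there is
`ε₀ > 0` such that for every `0 < ε < ε₀`, taking the slip coefficients
`a_u^I = c₁`, `a_θ^{II} = c₄`, `a_θ^I = ε`, `a_u^{II} = ε`, assumption (A) holds: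
the strict inequality (i) and the existence of `λ₀, λ₁ > 0` making the
6×6 matrix positive definite. -/
theorem assumptionA_navier_slip_regime
    (R ρ θ μ κ c₁ c₄ : ℝ)
    (hR : 0 < R) (hρ : 0 < ρ) (hθ : 0 < θ) (hμ : 0 < μ) (hκ : 0 < κ)
    (hc₁ : 0 < c₁) (hc₄ : 0 < c₄) :
    ∃ ε₀ : ℝ, 0 < ε₀ ∧ ∀ ε : ℝ, 0 < ε → ε < ε₀ →
      (0 < 16 / (15 * R) * ε * (κ / θ) * ρ - 2 / (5 * R) * ε * ε * (κ / θ) * ρ) ∧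
      ∃ l0 l1 : ℝ, 0 < l0 ∧ 0 < l1 ∧
        (slipMatrix R ρ θ μ κ c₁ ε ε c₄ l0 l1).PosDef := by
  obtain ⟨A, B, D, k, j, hA, hB, hD, hM⟩ := exists_slipMatrix_navier_eq hR hρ hθ hμ hκ hc₁ hc₄
  obtain ⟨L, hL, hLB, hLA⟩ : ∃ L > 0,
      8 * (R * ρ / 2) ^ 2 / (R * θ) < L * B ∧ 16 * (μ / 2) ^ 2 / (R * θ) < L * A :=
    ((eventually_gt_atTop 0).and (((tendsto_id.atTop_mul_const hB).eventually_gt_atTop _).and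
      ((tendsto_id.atTop_mul_const hA).eventually_gt_atTop _))).exists
  have hsmall := (slipPatternMatrix.eventually_posDef (mul_pos hR hθ) (mul_pos hL hA) hLB
    (mul_pos hL hD) hLA (mul_pos hL hB) (L * k) (L * k) (L * k) (L * j) (L * j)).and
    (Iio_mem_nhds one_pos)
  obtain ⟨ε₀, hε₀, hε₀small⟩ := Metric.eventually_nhds_iff.mp hsmall
  refine ⟨ε₀, hε₀, fun ε hε hεε₀ => ?_⟩
  obtain ⟨hpos, hε1⟩ := hε₀small (by rwa [Real.dist_0_eq_abs, abs_of_pos hε])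
  refine ⟨?_, L / ε, L / ε, by positivity, by positivity, by rwa [hM L ε hε.ne']⟩
  have hi : 16 / (15 * R) * ε * (κ / θ) * ρ - 2 / (5 * R) * ε * ε * (κ / θ) * ρ =
      ε * (κ * ρ / (θ * R)) * (16 / 15 - 2 / 5 * ε) := by ring
  rw [hi]
  exact mul_pos (by positivity) (by linarith)
end
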